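/- arXiv:2403.06671 — 2 statements merged into one kernel-verified Lean document; each statement's English description precedes it below -/
import Mathlib

section
/- Let G = (V, E, w) be a weighted graph, and let W ⊆ V with |W| ≥ 2 such that G[W] is a clique. Let w_W = min{w(u,v) : {u,v} ∈ E(W)}. If S ⊆ V satisfies κ_G(S) < (2/9)·|W|²·w_W and |S ∩ W| > |W \ S|, then in fact |S ∩ W| > (2/3)·|W|. -/
/-!
If the clique `W` is split by `S` into parts of sizes `a = |S ∩ W|` and `b = |W \ S|`, every
one of the `a * b` clique edges between the parts leaves `S`, so `κ(S) ≥ a b w_W`. When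
`b ≤ 2a` and `a ≤ 2b` we have `9ab ≥ 2(a + b)²`, since `(2a - b)(2b - a) ≥ 0`; so a cut below
`(2/9)|W|² w_W` forces one part to exceed twice the other, and the majority part is `S ∩ W`.
-/

open Finset

lemma card_mul_card_mul_le_sum_cut {V : Type*} [Fintype V] [DecidableEq V]
    (w : V → V → ℝ) (hnonneg : ∀ u v, 0 ≤ w u v) (S A B : Finset V)
    (hA : A ⊆ S) (hB : B ⊆ Sᶜ) (c : ℝ) (hc : ∀ u ∈ A, ∀ v ∈ B, c ≤ w u v) :
    (A.card * B.card : ℝ) * c ≤ ∑ u ∈ S, ∑ v ∈ Sᶜ, w u v :=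
  calc (A.card * B.card : ℝ) * c = ∑ _u ∈ A, ∑ _v ∈ B, c := by
        simp only [sum_const, nsmul_eq_mul]
        ring
    _ ≤ ∑ u ∈ A, ∑ v ∈ B, w u v := sum_le_sum fun u hu => sum_le_sum fun v hv => hc u hu v hv
    _ ≤ ∑ u ∈ A, ∑ v ∈ Sᶜ, w u v :=
        sum_le_sum fun u _ => sum_le_sum_of_subset_of_nonneg hB fun v _ _ => hnonneg u v
    _ ≤ ∑ u ∈ S, ∑ v ∈ Sᶜ, w u v :=
        sum_le_sum_of_subset_of_nonneg hA fun u _ _ => sum_nonneg fun v _ => hnonneg u v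

lemma two_mul_add_sq_le_nine_mul {a b : ℝ} (hba : b ≤ 2 * a) (hab : a ≤ 2 * b) :
    2 * (a + b) ^ 2 ≤ 9 * (a * b) := by
  nlinarith [mul_nonneg (sub_nonneg.2 hba) (sub_nonneg.2 hab)]

theorem stmt_1_general {V : Type*} [Fintype V] [DecidableEq V]
    (w : V → V → ℝ) (hnonneg : ∀ u v, 0 ≤ w u v)
    (W : Finset V)
    (wW : ℝ)
    (hclique : ∀ u ∈ W, ∀ v ∈ W, u ≠ v → wW ≤ w u v)
    (S : Finset V)
    (hκ : ∑ u ∈ S, ∑ v ∈ Sᶜ, w u v < (2 / 9) * (W.card : ℝ) ^ 2 * wW)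
    (hmaj : (W \ S).card < (S ∩ W).card) :
    (2 / 3 : ℝ) * W.card < (S ∩ W).card := by
  by_contra! hsmall
  have hcard : (W.card : ℝ) = (S ∩ W).card + (W \ S).card := by
    rw [← card_inter_add_card_sdiff W S, inter_comm S W]
    push_cast
    rfl
  have hcut : ((S ∩ W).card * (W \ S).card : ℝ) * wW ≤ ∑ u ∈ S, ∑ v ∈ Sᶜ, w u v := by
    refine card_mul_card_mul_le_sum_cut w hnonneg S _ _ inter_subset_left
      (fun v hv => mem_compl.2 (mem_sdiff.1 hv).2) wW fun u hu v hv => ?_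
    refine hclique u (mem_inter.1 hu).2 v (mem_sdiff.1 hv).1 ?_
    rintro rfl
    exact (mem_sdiff.1 hv).2 (mem_inter.1 hu).1
  have hwW : 0 < wW := by
    have hκ_nonneg : 0 ≤ ∑ u ∈ S, ∑ v ∈ Sᶜ, w u v :=
      sum_nonneg fun u _ => sum_nonneg fun v _ => hnonneg u v
    by_contra! h
    nlinarith [mul_nonneg (sq_nonneg (W.card : ℝ)) (neg_nonneg.2 h)]
  have hba : ((W \ S).card : ℝ) < (S ∩ W).card := by exact_mod_cast hmaj
  rw [hcard] at hκ hsmall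
  have hbalanced := two_mul_add_sq_le_nine_mul (a := ((S ∩ W).card : ℝ))
    (b := (W \ S).card) (by linarith) (by linarith)
  nlinarith [mul_le_mul_of_nonneg_right hbalanced hwW.le]

/-- If `W` induces a clique with all edge weights at least `wW`, `|W| ≥ 2`,
`κ(S) < (2/9)|W|² wW` and `|S ∩ W| > |W \ S|`, then in fact `|S ∩ W| > (2/3)|W|`. -/
theorem stmt_1 {V : Type*} [Fintype V] [DecidableEq V]
    (w : V → V → ℝ) (hsymm : ∀ u v, w u v = w v u) (hnonneg : ∀ u v, 0 ≤ w u v)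
    (W : Finset V) (hW : 2 ≤ W.card)
    (wW : ℝ) (hwW : 0 < wW)
    (hclique : ∀ u ∈ W, ∀ v ∈ W, u ≠ v → wW ≤ w u v)
    (S : Finset V)
    (hκ : ∑ u ∈ S, ∑ v ∈ Sᶜ, w u v < (2 / 9) * (W.card : ℝ) ^ 2 * wW)
    (hmaj : (W \ S).card < (S ∩ W).card) :
    (2 / 3 : ℝ) * W.card < (S ∩ W).card :=
  stmt_1_general w hnonneg W wW hclique S hκ hmaj
end

section
/- Let G = (V, E, w) be a weighted graph and W ⊆ V with |W| ≥ 2 such that G[W] is a clique, and let w_W = min{w(u,v) : {u,v} ∈ E(W)}. Define T_G(W) = {S ⊆ V : κ_G(S) < (2/9)·|W|²·w_W and |S ∩ W| > |W \ S|}. Then T_G(W) is a κ_G-tangle of order (2/9)·|W|²·w_W; that is: (T.0) every S ∈ T_G(W) satisfies κ_G(S) < (2/9)|W|²w_W; (T.1) for every S ⊆ V with κ_G(S) < (2/9)|W|²w_W, either S ∈ T_G(W) or V\S ∈ T_G(W); (T.2) any three members of T_G(W) have nonempty intersection; (T.3) no singleton {x} belongs to T_G(W). -/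
/-!
Write `a = |W \ S|` and `b = |S ∩ W|`. Every clique edge between `S ∩ W` and `W \ S` crosses
the cut, so `κ(S) ≥ a b w_W`; and `9ab ≥ 2(a + b)²` as soon as `a ≤ 2b` and `b ≤ 2a`, because
the difference is `(2a - b)(2b - a)`. Hence a cut of order `< (2/9)|W|² w_W` splits `W` worse
than `1 : 2`. This gives (T.1) (a cut with `a = b` is balanced), and (T.2): each member of
`T_G(W)` misses fewer than `|W|/3` vertices of `W`, so three members share a vertex of `W`.
-/

open Finset

section Cut

variable {V : Type*} [Fintype V] [DecidableEq V] (w : V → V → ℝ)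

def cutWeight (S : Finset V) : ℝ := ∑ u ∈ S, ∑ v ∈ Sᶜ, w u v

theorem cutWeight_compl (hsymm : ∀ u v, w u v = w v u) (S : Finset V) :
    cutWeight w Sᶜ = cutWeight w S := by
  rw [cutWeight, cutWeight, compl_compl, sum_comm]
  exact sum_congr rfl fun u _ => sum_congr rfl fun v _ => hsymm v u

theorem card_inter_mul_card_sdiff_mul_le_cutWeight (hnonneg : ∀ u v, 0 ≤ w u v)
    {W : Finset V} {wW : ℝ} (hclique : ∀ u ∈ W, ∀ v ∈ W, u ≠ v → wW ≤ w u v) (S : Finset V) :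
    ((S ∩ W).card : ℝ) * (W \ S).card * wW ≤ cutWeight w S := by
  have hsdiff : W \ S = Sᶜ ∩ W := by ext; simp [and_comm]
  calc ((S ∩ W).card : ℝ) * (W \ S).card * wW
      = ∑ u ∈ S ∩ W, ∑ v ∈ Sᶜ ∩ W, wW := by
        rw [hsdiff, sum_const, sum_const, nsmul_eq_mul, nsmul_eq_mul]; ring
    _ ≤ ∑ u ∈ S ∩ W, ∑ v ∈ Sᶜ ∩ W, w u v :=
        sum_le_sum fun u hu => sum_le_sum fun v hv => by
          rw [mem_inter] at hu hv
          exact hclique u hu.2 v hv.2 fun huv => mem_compl.1 hv.1 (huv ▸ hu.1)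
    _ ≤ ∑ u ∈ S, ∑ v ∈ Sᶜ, w u v :=
        (sum_le_sum fun u _ => sum_le_sum_of_subset_of_nonneg inter_subset_left
          fun v _ _ => hnonneg u v).trans
        (sum_le_sum_of_subset_of_nonneg inter_subset_left
          fun u _ _ => sum_nonneg fun v _ => hnonneg u v)

theorem two_mul_sq_add_le_nine_mul {a b : ℝ} (hab : a ≤ 2 * b) (hba : b ≤ 2 * a) :
    2 * (a + b) ^ 2 ≤ 9 * (a * b) := by
  nlinarith [mul_nonneg (sub_nonneg.2 hab) (sub_nonneg.2 hba)]

theorem le_cutWeight_of_balanced (hnonneg : ∀ u v, 0 ≤ w u v)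
    {W : Finset V} {wW : ℝ} (hwW : 0 < wW)
    (hclique : ∀ u ∈ W, ∀ v ∈ W, u ≠ v → wW ≤ w u v) {S : Finset V}
    (hab : (W \ S).card ≤ 2 * (S ∩ W).card) (hba : (S ∩ W).card ≤ 2 * (W \ S).card) :
    2 / 9 * (W.card : ℝ) ^ 2 * wW ≤ cutWeight w S := by
  have hW : (W.card : ℝ) = (W \ S).card + (S ∩ W).card := by
    rw [← Nat.cast_add, add_comm, inter_comm, card_inter_add_card_sdiff]
  have hsq := two_mul_sq_add_le_nine_mul (a := ((W \ S).card : ℝ)) (b := (S ∩ W).card)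
    (by exact_mod_cast hab) (by exact_mod_cast hba)
  calc 2 / 9 * (W.card : ℝ) ^ 2 * wW ≤ ((S ∩ W).card : ℝ) * (W \ S).card * wW :=
        mul_le_mul_of_nonneg_right (by rw [hW]; linarith) hwW.le
    _ ≤ cutWeight w S := card_inter_mul_card_sdiff_mul_le_cutWeight w hnonneg hclique S

end Cut

theorem Finset.inter_inter_nonempty_of_card_sdiff_add_lt {α : Type*} [DecidableEq α]
    {W A B C : Finset α} (h : (W \ A).card + (W \ B).card + (W \ C).card < W.card) :
    (A ∩ B ∩ C).Nonempty := by
  have hsub : W \ (A ∩ B ∩ C) ⊆ (W \ A ∪ W \ B) ∪ W \ C := by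
    intro x; simp only [mem_sdiff, mem_union, mem_inter]; tauto
  have hcard : (W \ (A ∩ B ∩ C)).card < W.card :=
    ((card_le_card hsub).trans ((card_union_le _ _).trans
      (Nat.add_le_add_right (card_union_le _ _) _))).trans_lt h
  obtain ⟨x, hxW, hx⟩ := exists_mem_notMem_of_card_lt_card hcard
  exact ⟨x, by simpa [hxW] using hx⟩

/-- The set system `T_G(W)` induced by a clique `W` with `|W| ≥ 2` is a tangle of
order `(2/9)|W]² w_W`: it satisfies (T.0)–(T.3). -/
theorem stmt_2 {V : Type*} [Fintype V] [DecidableEq V]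
    (w : V → V → ℝ) (hsymm : ∀ u v, w u v = w v u) (hnonneg : ∀ u v, 0 ≤ w u v)
    (W : Finset V) (hW : 2 ≤ W.card)
    (wW : ℝ) (hwW : 0 < wW)
    (hclique : ∀ u ∈ W, ∀ v ∈ W, u ≠ v → wW ≤ w u v)
    (κ : Finset V → ℝ) (hκ : ∀ S, κ S = ∑ u ∈ S, ∑ v ∈ Sᶜ, w u v)
    (k : ℝ) (hk : k = (2 / 9) * (W.card : ℝ) ^ 2 * wW)
    (T : Set (Finset V))
    (hT : ∀ S : Finset V, S ∈ T ↔ κ S < k ∧ (W \ S).card < (S ∩ W).card) :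
    (∀ S ∈ T, κ S < k) ∧
    (∀ S : Finset V, κ S < k → S ∈ T ∨ Sᶜ ∈ T) ∧
    (∀ S₁ ∈ T, ∀ S₂ ∈ T, ∀ S₃ ∈ T, (S₁ ∩ S₂ ∩ S₃).Nonempty) ∧
    (∀ x : V, ({x} : Finset V) ∉ T) := by
  obtain rfl : κ = cutWeight w := funext hκ
  subst hk
  have unbalanced {S : Finset V} (hS : cutWeight w S < 2 / 9 * (W.card : ℝ) ^ 2 * wW) :
      ¬((W \ S).card ≤ 2 * (S ∩ W).card ∧ (S ∩ W).card ≤ 2 * (W \ S).card) :=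
    fun ⟨hab, hba⟩ => (le_cutWeight_of_balanced w hnonneg hwW hclique hab hba).not_gt hS
  have three_mul_lt {S : Finset V} (hS : S ∈ T) : 3 * (W \ S).card < W.card := by
    obtain ⟨hcut, hlt⟩ := (hT S).1 hS
    have := card_inter_add_card_sdiff W S
    rw [inter_comm] at this
    have := unbalanced hcut
    omega
  refine ⟨fun S hS => ((hT S).1 hS).1, fun S hS => ?_, fun S₁ h₁ S₂ h₂ S₃ h₃ => ?_, fun x hx => ?_⟩
  · have hcompl₁ : W \ Sᶜ = S ∩ W := by ext; simp [and_comm]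
    have hcompl₂ : Sᶜ ∩ W = W \ S := by ext; simp [and_comm]
    rw [hT, hT, cutWeight_compl w hsymm, hcompl₁, hcompl₂]
    rcases lt_trichotomy (W \ S).card (S ∩ W).card with hlt | heq | hgt
    · exact .inl ⟨hS, hlt⟩
    · exact absurd ⟨by omega, by omega⟩ (unbalanced hS)
    · exact .inr ⟨hS, hgt⟩
  · have := three_mul_lt h₁; have := three_mul_lt h₂; have := three_mul_lt h₃
    exact inter_inter_nonempty_of_card_sdiff_add_lt (W := W) (by omega)
  · have hx := ((hT _).1 hx).2
    have h₁ : ({x} ∩ W).card ≤ 1 := (card_le_card inter_subset_left).trans (card_singleton x).le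
    have h₂ : W.card - 1 ≤ (W \ {x}).card := by simpa using le_card_sdiff {x} W
    omega
end
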